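/- arXiv:2603.16540 — 4 statements merged into one kernel-verified Lean document; each statement's English description precedes it below -/
import Mathlib

section
/- Let A ∈ End(ℝ²). There exists a basis of ℝ² with respect to which the matrix of A has at most one nonzero entry in each row and each column if and only if A is diagonalizable over ℝ, or A² is diagonalizable over ℝ with a single eigenvalue (i.e., A² is a real scalar multiple of the identity). -/
/-!
A 2×2 matrix with at most one nonzero entry in each row and column is diagonal or antidiagonal.
A diagonal matrix of `A` is the same as an eigenbasis, and an antidiagonal 2×2 matrix squares
to a scalar. Conversely, if `A² = λ`, either `A` is a scalar, or some `v` is not an eigenvector,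
and then in the basis `(v, A v)` the matrix of `A` is `!![0, λ; 1, 0]`.
-/

open Module Matrix LinearMap

namespace Matrix

def IsPartialMonomial {n α : Type*} [Zero α] (M : Matrix n n α) : Prop :=
  (∀ i j k, M i j ≠ 0 → M i k ≠ 0 → j = k) ∧ (∀ i j k, M i k ≠ 0 → M j k ≠ 0 → i = j)

theorem isPartialMonomial_fin_two_iff {α : Type*} [Zero α] (M : Matrix (Fin 2) (Fin 2) α) :
    M.IsPartialMonomial ↔ M.IsDiag ∨ (M 0 0 = 0 ∧ M 1 1 = 0) := by
  rw [isDiag_iff_diagonal_diag]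
  constructor
  · rintro ⟨hrow, hcol⟩
    by_cases h01 : M 0 1 = 0
    · by_cases h10 : M 1 0 = 0
      · left
        ext i j
        fin_cases i <;> fin_cases j <;> simp [h01, h10]
      · exact Or.inr ⟨by_contra fun h => absurd (hcol 0 1 0 h h10) (by decide),
          by_contra fun h => absurd (hrow 1 0 1 h10 h) (by decide)⟩
    · exact Or.inr ⟨by_contra fun h => absurd (hrow 0 0 1 h h01) (by decide),
        by_contra fun h => absurd (hcol 0 1 1 h01 h) (by decide)⟩
  · rintro (hdiag | ⟨h00, h11⟩)
    · rw [← hdiag]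
      constructor <;> intro i j k <;> fin_cases i <;> fin_cases j <;> fin_cases k <;> simp
    · constructor <;> intro i j k <;> fin_cases i <;> fin_cases j <;> fin_cases k <;> simp_all

theorem sq_eq_smul_one_of_antidiagonal_fin_two {R : Type*} [CommRing R]
    (M : Matrix (Fin 2) (Fin 2) R) (h00 : M 0 0 = 0) (h11 : M 1 1 = 0) :
    M ^ 2 = (M 0 1 * M 1 0) • 1 := by
  ext i j
  fin_cases i <;> fin_cases j <;> simp [sq, mul_apply, h00, h11, mul_comm]

end Matrix

theorem AlgEquiv.pow_eq_smul_one_iff {R A B : Type*} [CommSemiring R] [Semiring A] [Semiring B]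
    [Algebra R A] [Algebra R B] (e : A ≃ₐ[R] B) (a : A) (n : ℕ) (c : R) :
    e a ^ n = c • 1 ↔ a ^ n = c • 1 := by
  rw [← map_pow, ← map_one e, ← map_smul, e.injective.eq_iff]

theorem LinearMap.toMatrix_eq_diagonal_iff {R M ι : Type*} [CommSemiring R] [AddCommMonoid M]
    [Module R M] [Fintype ι] [DecidableEq ι] (b : Basis ι R M) (f : M →ₗ[R] M) (μ : ι → R) :
    toMatrix b b f = diagonal μ ↔ ∀ i, f (b i) = μ i • b i := by
  rw [← (toLin b b).injective.eq_iff, toLin_toMatrix]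
  refine ⟨fun h i => by simp [h, toLin_self, diagonal_apply, ite_smul],
    fun h => b.ext fun i => ?_⟩
  simp [h, toLin_self, diagonal_apply, ite_smul]

theorem LinearMap.exists_basis_toMatrix_eq_of_sq_eq_smul {K V : Type*} [Field K]
    [AddCommGroup V] [Module K V] (hV : finrank K V = 2) {f : V →ₗ[K] V} {c : K}
    (hf : f ^ 2 = c • 1) {v : V} (hv : LinearIndependent K ![v, f v]) :
    ∃ b : Basis (Fin 2) K V, toMatrix b b f = !![0, c; 1, 0] := by
  have : FiniteDimensional K V := .of_finrank_pos (by omega)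
  let b := basisOfLinearIndependentOfCardEqFinrank hv (by simp [hV])
  have hb : ⇑b = ![v, f v] := coe_basisOfLinearIndependentOfCardEqFinrank hv _
  have hfb0 : f (b 0) = b 1 := by simp [hb]
  have hfb1 : f (b 1) = c • b 0 := by simpa [hb, sq] using congr($hf v)
  refine ⟨b, ?_⟩
  ext i j
  fin_cases i <;> fin_cases j <;> simp [toMatrix_apply, hfb0, hfb1]

theorem LinearMap.exists_basis_toMatrix_isDiag_or_eq_of_sq_eq_smul {K V : Type*} [Field K]
    [AddCommGroup V] [Module K V] (hV : finrank K V = 2) {f : V →ₗ[K] V} {c : K}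
    (hf : f ^ 2 = c • 1) :
    ∃ b : Basis (Fin 2) K V, (toMatrix b b f).IsDiag ∨ toMatrix b b f = !![0, c; 1, 0] := by
  by_cases hcyc : ∃ v, LinearIndependent K ![v, f v]
  · obtain ⟨v, hv⟩ := hcyc
    obtain ⟨b, hb⟩ := exists_basis_toMatrix_eq_of_sq_eq_smul hV hf hv
    exact ⟨b, .inr hb⟩
  · push Not at hcyc
    obtain ⟨a, rfl⟩ := exists_eq_smul_id_of_forall_notLinearIndependent hcyc
    have : FiniteDimensional K V := .of_finrank_pos (by omega)
    let b := finBasisOfFinrankEq K V hV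
    exact ⟨b, .inl (by simp [isDiag_smul_one])⟩

/-- A real 2×2 matrix A admits a basis of ℝ² in which its matrix has at most one
nonzero entry in each row and column iff A is diagonalizable over ℝ or
`A² = λ•Id` for some real λ. -/
theorem stmt_8 (A : Matrix (Fin 2) (Fin 2) ℝ) :
    (∃ b : Module.Basis (Fin 2) ℝ (Fin 2 → ℝ),
      (∀ i j k : Fin 2, LinearMap.toMatrix b b (Matrix.toLin' A) i j ≠ 0 →
        LinearMap.toMatrix b b (Matrix.toLin' A) i k ≠ 0 → j = k) ∧
      (∀ i j k : Fin 2, LinearMap.toMatrix b b (Matrix.toLin' A) i k ≠ 0 →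
        LinearMap.toMatrix b b (Matrix.toLin' A) j k ≠ 0 → i = j)) ↔
    ((∃ (b : Module.Basis (Fin 2) ℝ (Fin 2 → ℝ)) (μ : Fin 2 → ℝ),
        ∀ i, A.mulVec (b i) = μ i • b i) ∨
      (∃ lam : ℝ, A ^ 2 = lam • (1 : Matrix (Fin 2) (Fin 2) ℝ))) := by
  set f := toLin' A
  have hsq (c : ℝ) : A ^ 2 = c • 1 ↔ f ^ 2 = c • 1 :=
    (toLinAlgEquiv'.pow_eq_smul_one_iff A 2 c).symm
  change (∃ b, (toMatrix b b f).IsPartialMonomial) ↔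
    ((∃ (b : Basis (Fin 2) ℝ (Fin 2 → ℝ)) (μ : Fin 2 → ℝ), ∀ i, f (b i) = μ i • b i) ∨ _)
  simp_rw [hsq, isPartialMonomial_fin_two_iff]
  constructor
  · rintro ⟨b, hdiag | ⟨h00, h11⟩⟩
    · exact .inl ⟨b, _, (toMatrix_eq_diagonal_iff b f _).1 hdiag.diagonal_diag.symm⟩
    · exact .inr ⟨_, ((toMatrixAlgEquiv b).pow_eq_smul_one_iff f 2 _).1
        (sq_eq_smul_one_of_antidiagonal_fin_two _ h00 h11)⟩
  · rintro (⟨b, μ, hb⟩ | ⟨c, hc⟩)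
    · exact ⟨b, .inl ((toMatrix_eq_diagonal_iff b f μ).2 hb ▸ isDiag_diagonal μ)⟩
    · obtain ⟨b, hb⟩ := exists_basis_toMatrix_isDiag_or_eq_of_sq_eq_smul (by simp) hc
      exact ⟨b, hb.imp_right fun h => by simp [h]⟩
end

section
/- For every n ≥ 2, the polynomial x^{2^{n−1}} − 1 ∈ ℝ[x] has exactly n factorizations (up to reordering) into monic factors of the form x^d − r with d ∈ ℕ₊ and r ∈ ℝ \ {0}, namely the factorizations obtained by successively splitting x^{2^k} − 1 = (x^{2^{k−1}} − 1)(x^{2^{k−1}} + 1) and never splitting any factor x^{2^j} + 1. -/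
open Polynomial

/-!
Every factor `X ^ d - r` of `X ^ N - 1` with `N = 2 ^ m` has all its complex roots among the
`N`-th roots of unity. Comparing a root `z` with `z * ζ`, `ζ` a primitive `d`-th root of unity,
gives `d ∣ N`, so `d` is a power of two, and `r ^ N = 1` forces `r = ±1`. Evaluating at `1` and
using that `X ^ N - 1` is squarefree, exactly one factor is `X ^ 2 ^ a - 1`; all others are of the
form `X ^ 2 ^ j + 1`. If `a < m`, a root of `X ^ 2 ^ a + 1` is a root of `X ^ N - 1` but not of
`X ^ 2 ^ a - 1`, so it is a root of some `X ^ 2 ^ j + 1`, which forces `j = a`. Merging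
`(X ^ 2 ^ a - 1) * (X ^ 2 ^ a + 1) = X ^ 2 ^ (a + 1) - 1` and repeating determines all factors.
-/

theorem pow_two_pow_eq_one_of_lt {M : Type*} [Monoid M] [HasDistribNeg M] {z : M} {a b : ℕ}
    (ha : z ^ 2 ^ a = -1) (hab : a < b) : z ^ 2 ^ b = 1 := by
  obtain ⟨k, rfl⟩ := Nat.exists_eq_add_of_lt hab
  rw [add_assoc, pow_add, pow_mul, ha, (Nat.even_pow.mpr ⟨even_two, by omega⟩).neg_one_pow]

theorem eq_of_pow_two_pow_eq_neg_one {M : Type*} [Monoid M] [HasDistribNeg M]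
    (h : (-1 : M) ≠ 1) {z : M} {a b : ℕ} (ha : z ^ 2 ^ a = -1) (hb : z ^ 2 ^ b = -1) : a = b := by
  by_contra hne
  rcases Nat.lt_or_gt_of_ne hne with hab | hba
  · exact h (hb.symm.trans (pow_two_pow_eq_one_of_lt ha hab))
  · exact h (ha.symm.trans (pow_two_pow_eq_one_of_lt hb hba))

theorem pow_two_pow_succ_sub_one {R : Type*} [CommRing R] (x : R) (a : ℕ) :
    x ^ 2 ^ (a + 1) - 1 = (x ^ 2 ^ a - 1) * (x ^ 2 ^ a + 1) := by
  rw [pow_succ, pow_mul]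
  ring

theorem pow_eq_one_of_X_pow_sub_C_dvd {R A : Type*} [CommRing R] [CommRing A] [Algebra R A]
    {d N : ℕ} {r : R} {z : A} (hz : z ^ d = algebraMap R A r)
    (h : (X ^ d - C r : R[X]) ∣ X ^ N - 1) : z ^ N = 1 := by
  have := map_dvd (aeval z) h
  simp only [map_sub, map_pow, aeval_X, aeval_C, map_one, hz, sub_self, zero_dvd_iff,
    sub_eq_zero] at this
  exact this

theorem dvd_and_pow_eq_one_of_X_pow_sub_C_dvd {d N : ℕ} {r : ℝ} (hd : d ≠ 0)
    (h : (X ^ d - C r : ℝ[X]) ∣ X ^ N - 1) : d ∣ N ∧ r ^ N = 1 := by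
  obtain ⟨z, hz⟩ := IsAlgClosed.exists_pow_nat_eq (r : ℂ) (Nat.pos_of_ne_zero hd)
  have hζ := Complex.isPrimitiveRoot_exp d hd
  set ζ := Complex.exp (2 * Real.pi * Complex.I / d)
  have hzN : z ^ N = 1 := pow_eq_one_of_X_pow_sub_C_dvd hz h
  have hzζN : (z * ζ) ^ N = 1 :=
    pow_eq_one_of_X_pow_sub_C_dvd (by rw [mul_pow, hz, hζ.pow_eq_one, mul_one]; rfl) h
  refine ⟨hζ.dvd_of_pow_eq_one N (by rwa [mul_pow, hzN, one_mul] at hzζN), ?_⟩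
  have hrN : (r : ℂ) ^ N = 1 := by rw [← hz, ← pow_mul, mul_comm, pow_mul, hzN, one_pow]
  exact_mod_cast hrN

theorem exists_pow_two_of_X_pow_sub_C_dvd {d m : ℕ} {r : ℝ} (hd : d ≠ 0)
    (h : (X ^ d - C r : ℝ[X]) ∣ X ^ 2 ^ m - 1) : (∃ j ≤ m, d = 2 ^ j) ∧ (r = 1 ∨ r = -1) := by
  obtain ⟨hdvd, hr⟩ := dvd_and_pow_eq_one_of_X_pow_sub_C_dvd hd h
  refine ⟨(Nat.dvd_prime_pow Nat.prime_two).mp hdvd, ?_⟩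
  rcases (pow_eq_one_iff_of_ne_zero (by positivity)).mp hr with h1 | ⟨h1, -⟩
  exacts [.inl h1, .inr h1]

theorem not_isUnit_X_pow_add_one {n : ℕ} (hn : n ≠ 0) : ¬IsUnit (X ^ n + 1 : ℝ[X]) := by
  intro hu
  have := natDegree_eq_zero_of_isUnit hu
  rw [← C_1, natDegree_X_pow_add_C] at this
  exact hn this

theorem exists_snd_eq_one_of_prod_eq_X_pow_sub_one {N : ℕ} {S : Multiset (ℕ × ℝ)}
    (hprod : (S.map fun q => (X : ℝ[X]) ^ q.1 - C q.2).prod = X ^ N - 1) : ∃ q ∈ S, q.2 = 1 := by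
  have := congrArg (eval 1) hprod
  simp only [eval_multiset_prod, Multiset.map_map, Function.comp_def, eval_sub, eval_pow, eval_X,
    eval_C, one_pow, eval_one, sub_self, Multiset.prod_eq_zero_iff, Multiset.mem_map] at this
  obtain ⟨q, hq, h⟩ := this
  exact ⟨q, hq, (sub_eq_zero.mp h).symm⟩

theorem snd_ne_one_of_prod_eq_X_pow_sub_one {N d : ℕ} {T : Multiset (ℕ × ℝ)} (hN : N ≠ 0)
    (hprod : (((d, 1) ::ₘ T).map fun q => (X : ℝ[X]) ^ q.1 - C q.2).prod = X ^ N - 1) :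
    ∀ q ∈ T, q.2 ≠ 1 := by
  rintro ⟨e, r⟩ hq (rfl : r = 1)
  obtain ⟨T', rfl⟩ := Multiset.exists_cons_of_mem hq
  have hsq : Squarefree (X ^ N - 1 : ℝ[X]) :=
    (X_pow_sub_one_separable_iff.mpr (Nat.cast_ne_zero.mpr hN)).squarefree
  have hdvd (k : ℕ) : (X - C 1 : ℝ[X]) ∣ X ^ k - C 1 := by
    simpa using sub_dvd_pow_sub_pow (X : ℝ[X]) 1 k
  refine not_isUnit_X_sub_C (1 : ℝ) (hsq _ (hprod ▸ ?_))
  simp only [Multiset.map_cons, Multiset.prod_cons]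
  exact mul_dvd_mul (hdvd d) (dvd_mul_of_dvd_left (hdvd e) _)

theorem mul_prod_X_pow_two_pow_add_one (a t : ℕ) :
    (X ^ 2 ^ a - 1 : ℝ[X]) * ((Multiset.range t).map fun i => X ^ 2 ^ (a + t - 1 - i) + 1).prod =
      X ^ 2 ^ (a + t) - 1 := by
  induction t generalizing a with
  | zero => simp
  | succ t ih =>
    rw [Multiset.range_succ, Multiset.map_cons, Multiset.prod_cons, ← mul_assoc,
      show a + (t + 1) - 1 - t = a by omega, ← pow_two_pow_succ_sub_one,
      show a + (t + 1) = a + 1 + t by omega, ← ih (a + 1)]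

theorem eq_range_of_mul_prod_X_pow_add_one {a t : ℕ} {U : Multiset ℕ}
    (hU : ∀ d ∈ U, ∃ j, d = 2 ^ j)
    (h : (X ^ 2 ^ a - 1 : ℝ[X]) * (U.map fun d => X ^ d + 1).prod = X ^ 2 ^ (a + t) - 1) :
    U = (Multiset.range t).map fun i => 2 ^ (a + t - 1 - i) := by
  induction t generalizing a U with
  | zero =>
    have hne : (X ^ 2 ^ a - 1 : ℝ[X]) ≠ 0 := by
      simpa using X_pow_sub_C_ne_zero (R := ℝ) (by positivity : 0 < 2 ^ a) 1
    have hprod : (U.map fun d => (X : ℝ[X]) ^ d + 1).prod = 1 :=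
      mul_left_cancel₀ hne (h.trans (mul_one _).symm)
    refine Multiset.eq_zero_of_forall_notMem fun d hd => ?_
    obtain ⟨j, rfl⟩ := hU d hd
    exact not_isUnit_X_pow_add_one (by positivity)
      (isUnit_of_dvd_one (hprod ▸ Multiset.dvd_prod (Multiset.mem_map_of_mem _ hd)))
  | succ t ih =>
    obtain ⟨ζ, hζ⟩ := IsAlgClosed.exists_pow_nat_eq (-1 : ℂ) (by positivity : 0 < 2 ^ a)
    have hroot : ∃ d ∈ U, ζ ^ d = -1 := by
      have := congrArg (aeval ζ) h
      simp only [map_mul, map_sub, map_pow, aeval_X, map_one, map_multiset_prod, Multiset.map_map,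
        Function.comp_def, map_add, hζ, pow_two_pow_eq_one_of_lt hζ (by omega : a < a + (t + 1)),
        sub_self, mul_eq_zero, Multiset.prod_eq_zero_iff, Multiset.mem_map] at this
      obtain h2 | ⟨d, hd, hd0⟩ := this
      · norm_num at h2
      · exact ⟨d, hd, eq_neg_of_add_eq_zero_left hd0⟩
    obtain ⟨d, hdU, hd⟩ := hroot
    obtain ⟨j, rfl⟩ := hU d hdU
    obtain rfl : j = a := eq_of_pow_two_pow_eq_neg_one (by norm_num) hd hζ
    obtain ⟨U', rfl⟩ := Multiset.exists_cons_of_mem hdU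
    rw [Multiset.map_cons, Multiset.prod_cons, ← mul_assoc, ← pow_two_pow_succ_sub_one,
      show j + (t + 1) = j + 1 + t by omega] at h
    rw [ih (fun d hd => hU d (Multiset.mem_cons_of_mem hd)) h, Multiset.range_succ,
      Multiset.map_cons, show j + (t + 1) = j + 1 + t by omega, show j + 1 + t - 1 - t = j by omega]

-- Meaningful only for `t ≤ m`: the subtractions are truncated.
def canonicalFactorization (m t : ℕ) : Multiset (ℕ × ℝ) :=
  (2 ^ (m - t), 1) ::ₘ (Multiset.range t).map fun i => (2 ^ (m - 1 - i), -1)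

theorem card_canonicalFactorization (m t : ℕ) :
    Multiset.card (canonicalFactorization m t) = t + 1 := by
  simp [canonicalFactorization]

theorem one_le_fst_and_snd_ne_zero_of_mem_canonicalFactorization {m t : ℕ} :
    ∀ q ∈ canonicalFactorization m t, 1 ≤ q.1 ∧ q.2 ≠ 0 := by
  simp [canonicalFactorization, Nat.one_le_two_pow]

theorem prod_map_canonicalFactorization {m t : ℕ} (ht : t ≤ m) :
    ((canonicalFactorization m t).map fun q => (X : ℝ[X]) ^ q.1 - C q.2).prod = X ^ 2 ^ m - 1 := by
  obtain ⟨a, rfl⟩ := Nat.exists_eq_add_of_le' ht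
  simpa [canonicalFactorization, Multiset.map_map, Function.comp_def, sub_neg_eq_add]
    using mul_prod_X_pow_two_pow_add_one a t

theorem eq_canonicalFactorization_of_prod_eq {m : ℕ} {S : Multiset (ℕ × ℝ)}
    (hS : ∀ q ∈ S, 1 ≤ q.1)
    (hprod : (S.map fun q => (X : ℝ[X]) ^ q.1 - C q.2).prod = X ^ 2 ^ m - 1) :
    ∃ t ≤ m, S = canonicalFactorization m t := by
  have hshape : ∀ q ∈ S, (∃ j ≤ m, q.1 = 2 ^ j) ∧ (q.2 = 1 ∨ q.2 = -1) := fun q hq =>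
    exists_pow_two_of_X_pow_sub_C_dvd (Nat.one_le_iff_ne_zero.mp (hS q hq))
      (hprod ▸ Multiset.dvd_prod (Multiset.mem_map_of_mem _ hq))
  obtain ⟨⟨d, r⟩, hpS, rfl : r = 1⟩ := exists_snd_eq_one_of_prod_eq_X_pow_sub_one hprod
  obtain ⟨T, rfl⟩ := Multiset.exists_cons_of_mem hpS
  obtain ⟨⟨a, ha, rfl⟩, -⟩ := hshape _ hpS
  have hT : ∀ q ∈ T, (∃ j, q.1 = 2 ^ j) ∧ q.2 = -1 := fun q hq =>
    have ⟨⟨j, _, hj⟩, hr⟩ := hshape q (Multiset.mem_cons_of_mem hq)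
    ⟨⟨j, hj⟩, hr.resolve_left (snd_ne_one_of_prod_eq_X_pow_sub_one (by positivity) hprod q hq)⟩
  have hTU : T = (T.map Prod.fst).map fun d => (d, -1) := by
    rw [Multiset.map_map]
    conv_lhs => rw [← Multiset.map_id T]
    exact Multiset.map_congr rfl fun q hq => Prod.ext rfl (hT q hq).2
  obtain ⟨t, rfl⟩ := Nat.exists_eq_add_of_le ha
  rw [hTU, Multiset.map_cons, Multiset.prod_cons, Multiset.map_map] at hprod
  have hU := eq_range_of_mul_prod_X_pow_add_one (U := T.map Prod.fst)
    (by simpa using fun q hq => (hT q hq).1) (by simpa [Function.comp_def] using hprod)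
  refine ⟨t, Nat.le_add_left t a, ?_⟩
  rw [hTU, hU, canonicalFactorization, Multiset.map_map, Nat.add_sub_cancel]
  rfl

/-- For n ≥ 2, the polynomial `x^(2^(n−1)) − 1 ∈ ℝ[x]` has exactly n factorizations
(as multisets of factors) into factors of the form `x^d − r` with `d ≥ 1`, `r ≠ 0`:
the t-th one (0 ≤ t < n) is `(x^(2^(n−1−t)) − 1) ∏_{j=n−1−t}^{n−2} (x^(2^j) + 1)`,
and these n factorizations are pairwise distinct. -/
theorem stmt_12 (n : ℕ) (hn : 2 ≤ n) :
    (∀ S : Multiset (ℕ × ℝ),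
      ((∀ p ∈ S, 1 ≤ p.1 ∧ p.2 ≠ 0) ∧
        (S.map fun p => (X : ℝ[X]) ^ p.1 - C p.2).prod = X ^ (2 ^ (n - 1)) - 1) ↔
      ∃ t < n, S = (2 ^ (n - 1 - t), (1 : ℝ)) ::ₘ
        ((Multiset.range t).map fun i => (2 ^ (n - 2 - i), (-1 : ℝ)))) ∧
    (∀ t₁ t₂, t₁ < n → t₂ < n →
      ((2 ^ (n - 1 - t₁), (1 : ℝ)) ::ₘ
        ((Multiset.range t₁).map fun i => (2 ^ (n - 2 - i), (-1 : ℝ)))) =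
      ((2 ^ (n - 1 - t₂), (1 : ℝ)) ::ₘ
        ((Multiset.range t₂).map fun i => (2 ^ (n - 2 - i), (-1 : ℝ)))) → t₁ = t₂) := by
  have hcanon (t : ℕ) : (2 ^ (n - 1 - t), (1 : ℝ)) ::ₘ
      ((Multiset.range t).map fun i => (2 ^ (n - 2 - i), (-1 : ℝ))) =
      canonicalFactorization (n - 1) t := by
    rw [canonicalFactorization, show n - 1 - 1 = n - 2 by omega]
  have hlt (t : ℕ) : t < n ↔ t ≤ n - 1 := by omega
  simp only [hcanon, hlt]
  refine ⟨fun S => ⟨fun ⟨hS, hprod⟩ => ?_, ?_⟩, fun t₁ t₂ _ _ h => ?_⟩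
  · exact eq_canonicalFactorization_of_prod_eq (fun q hq => (hS q hq).1) hprod
  · rintro ⟨t, ht, rfl⟩
    exact ⟨one_le_fst_and_snd_ne_zero_of_mem_canonicalFactorization,
      prod_map_canonicalFactorization ht⟩
  · simpa [card_canonicalFactorization] using congrArg Multiset.card h
end

section
/- On the standard filiform Lie algebra L_n (n ≥ 3), the diagonal derivation N = diag(d₁, d₂, d₁+d₂, 2d₁+d₂, …, (n−2)d₁+d₂) with d₁ = 12/(n³−3n²+2n+12) and d₂ = (n³−3n²−4n+24)/(n³−3n²+2n+12) satisfies Tr(N D) = Tr(D) for every diagonal derivation D = diag(x, y, x+y, …, (n−2)x+y). -/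
/-! The condition `Tr(N D) = Tr(D)` is linear in `D = diag(x, y, x+y, …, (n−2)x+y)`, so it amounts to
two linear "normal equations" for `(d₁, d₂)`, one for the coefficient of `x` and one for that of `y`.
Their coefficients are the power sums `∑ k` and `∑ k²` over `1 ≤ k ≤ n − 2`, and with the closed forms
of these sums the stated `d₁, d₂` (note `n³ − 3n² + 2n + 12 = n(n−1)(n−2) + 12 > 0`) solve both. -/

open Finset

section PowerSums

variable {K : Type*} [Field K] [CharZero K]

lemma sum_Icc_one_natCast (m : ℕ) : ∑ k ∈ Icc 1 m, (k : K) = m * (m + 1) / 2 := by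
  induction m with
  | zero => simp
  | succ m ih =>
    rw [sum_Icc_succ_top (by omega), ih]
    push_cast
    ring

lemma sum_Icc_one_natCast_sq (m : ℕ) :
    ∑ k ∈ Icc 1 m, (k : K) ^ 2 = m * (m + 1) * (2 * m + 1) / 6 := by
  induction m with
  | zero => simp
  | succ m ih =>
    rw [sum_Icc_succ_top (by omega), ih]
    push_cast
    ring

end PowerSums

lemma trace_eq_of_normal_equations {R : Type*} [CommRing R] (m : ℕ) (d₁ d₂ : R)
    (hx : d₁ * (1 + ∑ k ∈ Icc 1 m, (k : R) ^ 2) + d₂ * ∑ k ∈ Icc 1 m, (k : R)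
      = 1 + ∑ k ∈ Icc 1 m, (k : R))
    (hy : d₁ * ∑ k ∈ Icc 1 m, (k : R) + d₂ * (1 + m) = 1 + m) (x y : R) :
    d₁ * x + d₂ * y + ∑ k ∈ Icc 1 m, ((k : R) * d₁ + d₂) * ((k : R) * x + y)
      = x + y + ∑ k ∈ Icc 1 m, ((k : R) * x + y) := by
  have hN : ∑ k ∈ Icc 1 m, ((k : R) * d₁ + d₂) * ((k : R) * x + y)
      = ∑ k ∈ Icc 1 m, ((k : R) ^ 2 * (d₁ * x) + (k : R) * (d₁ * y + d₂ * x) + d₂ * y) :=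
    sum_congr rfl fun k _ ↦ by ring
  simp only [hN, sum_add_distrib, ← sum_mul, sum_const, Nat.card_Icc, add_tsub_cancel_right,
    nsmul_eq_mul]
  linear_combination x * hx + y * hy

/-- On the standard filiform Lie algebra L_n (n ≥ 3), the diagonal derivation
`N = diag(d₁, d₂, d₁+d₂, 2d₁+d₂, …, (n−2)d₁+d₂)` with
`d₁ = 12/(n³−3n²+2n+12)` and `d₂ = (n³−3n²−4n+24)/(n³−3n²+2n+12)` satisfies
`Tr(N D) = Tr(D)` for every diagonal derivation `D = diag(x, y, x+y, …, (n−2)x+y)`. -/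
theorem stmt_14 (n : ℕ) (hn : 3 ≤ n) (d₁ d₂ : ℝ)
    (hd₁ : d₁ = 12 / ((n : ℝ) ^ 3 - 3 * (n : ℝ) ^ 2 + 2 * (n : ℝ) + 12))
    (hd₂ : d₂ = ((n : ℝ) ^ 3 - 3 * (n : ℝ) ^ 2 - 4 * (n : ℝ) + 24)
      / ((n : ℝ) ^ 3 - 3 * (n : ℝ) ^ 2 + 2 * (n : ℝ) + 12)) :
    ∀ x y : ℝ,
      d₁ * x + d₂ * y + ∑ k ∈ Finset.Icc 1 (n - 2),
        ((k : ℝ) * d₁ + d₂) * ((k : ℝ) * x + y)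
      = x + y + ∑ k ∈ Finset.Icc 1 (n - 2), ((k : ℝ) * x + y) := by
  have hm : ((n - 2 : ℕ) : ℝ) = n - 2 := by
    rw [Nat.cast_sub (by omega)]
    norm_num
  set Q := (n : ℝ) ^ 3 - 3 * (n : ℝ) ^ 2 + 2 * (n : ℝ) + 12 with hQ
  have hQ₀ : Q ≠ 0 := by
    have hn' : (3 : ℝ) ≤ n := by exact_mod_cast hn
    nlinarith
  apply trace_eq_of_normal_equations
  · rw [sum_Icc_one_natCast_sq, sum_Icc_one_natCast, hm, hd₁, hd₂]
    field_simp
    rw [hQ]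
    ring
  · rw [sum_Icc_one_natCast, hm, hd₁, hd₂]
    field_simp
    rw [hQ]
    ring
end

section
/- Let 𝔤 be a real Lie algebra with a basis {X_1,…,X_n} such that for all i,j there is at most one k with structure constant c_{ij}^k ≠ 0, and whenever c_{ij}^k ≠ 0 and c_{st}^k ≠ 0 then {i,j} = {s,t} or {i,j} ∩ {s,t} = ∅ (a 'nice basis'). Then for every derivation D of 𝔤, the diagonal part of D with respect to this basis (the linear map sending X_i to D_{ii} X_i, where D_{ii} is the i-th diagonal entry of the matrix of D) is again a derivation of 𝔤. -/
/-!
Differentiating `⁅X_i, X_j⁆ = c_{ij}^k X_k` with a derivation `D` and reading off the `X_k`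
coordinate, niceness kills every term except the diagonal ones:
`c_{ij}^k D_{kk} = (D_{ii} + D_{jj}) c_{ij}^k`. So `D_{kk} = D_{ii} + D_{jj}` whenever
`c_{ij}^k ≠ 0`, which is exactly the condition for the diagonal map `X_i ↦ D_{ii} X_i` to be a
derivation.
-/

open Module

section NiceBasis

variable {R L ι : Type*} [CommRing R] [LieRing L] [LieAlgebra R L]

theorem Module.Basis.leibniz_of_basis (b : Basis ι R L) (E : L →ₗ[R] L)
    (h : ∀ i j, E ⁅b i, b j⁆ = ⁅E (b i), b j⁆ + ⁅b i, E (b j)⁆) (x y : L) :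
    E ⁅x, y⁆ = ⁅E x, y⁆ + ⁅x, E y⁆ := by
  let bracket : L →ₗ[R] L →ₗ[R] L := LieModule.toEnd R L L
  have : bracket.compr₂ E = bracket.comp E + bracket.compl₂ E :=
    LinearMap.ext_basis b b fun i j => by simpa [bracket] using h i j
  simpa [bracket] using LinearMap.congr_fun₂ this x y

section Fintype

variable [Fintype ι]

theorem Module.Basis.repr_lie_basis_apply (b : Basis ι R L) (x : L) (j k : ι) :
    b.repr ⁅x, b j⁆ k = ∑ s, b.repr x s * b.repr ⁅b s, b j⁆ k := by
  conv_lhs => rw [← b.sum_repr x]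
  simp only [sum_lie, smul_lie, map_sum, map_smul, Finsupp.finsetSum_apply, Finsupp.smul_apply,
    smul_eq_mul]

theorem Module.Basis.repr_basis_lie_apply (b : Basis ι R L) (y : L) (i k : ι) :
    b.repr ⁅b i, y⁆ k = ∑ t, b.repr y t * b.repr ⁅b i, b t⁆ k := by
  conv_lhs => rw [← b.sum_repr y]
  simp only [lie_sum, lie_smul, map_sum, map_smul, Finsupp.finsetSum_apply, Finsupp.smul_apply,
    smul_eq_mul]

variable [DecidableEq ι]

theorem Module.Basis.repr_toLin_diagonal_apply (b : Basis ι R L) (d : ι → R) (x : L) (k : ι) :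
    b.repr (Matrix.toLin b b (Matrix.diagonal d) x) k = d k * b.repr x k := by
  rw [← LinearMap.toMatrix_mulVec_repr b b, LinearMap.toMatrix_toLin, Matrix.mulVec_diagonal]

theorem Module.Basis.toLin_diagonal_self (b : Basis ι R L) (d : ι → R) (i : ι) :
    Matrix.toLin b b (Matrix.diagonal d) (b i) = d i • b i := by
  rw [Matrix.toLin_self, Finset.sum_eq_single i] <;> simp +contextual

theorem Module.Basis.toLin_diagonal_leibniz (b : Basis ι R L) (d : ι → R)
    (hd : ∀ i j k, b.repr ⁅b i, b j⁆ k ≠ 0 → d k = d i + d j) (x y : L) :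
    Matrix.toLin b b (Matrix.diagonal d) ⁅x, y⁆ =
      ⁅Matrix.toLin b b (Matrix.diagonal d) x, y⁆ +
        ⁅x, Matrix.toLin b b (Matrix.diagonal d) y⁆ := by
  refine b.leibniz_of_basis _ (fun i j => b.ext_elem fun k => ?_) x y
  rw [b.toLin_diagonal_self, b.toLin_diagonal_self, smul_lie, lie_smul, ← add_smul,
    b.repr_toLin_diagonal_apply, map_smul, Finsupp.smul_apply, smul_eq_mul]
  by_cases hk : b.repr ⁅b i, b j⁆ k = 0
  · simp [hk]
  · rw [hd i j k hk]

end Fintype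

structure IsNiceBasis (b : Basis ι R L) : Prop where
  eq_of_repr_lie_ne_zero : ∀ i j k l,
    b.repr ⁅b i, b j⁆ k ≠ 0 → b.repr ⁅b i, b j⁆ l ≠ 0 → k = l
  pair_eq_or_disjoint : ∀ i j s t k, b.repr ⁅b i, b j⁆ k ≠ 0 → b.repr ⁅b s, b t⁆ k ≠ 0 →
    ({i, j} : Set ι) = {s, t} ∨ ({i, j} ∩ {s, t} : Set ι) = ∅

namespace IsNiceBasis

variable {b : Basis ι R L} (hb : IsNiceBasis b) {i j k : ι}
include hb

theorem lie_eq_smul (hk : b.repr ⁅b i, b j⁆ k ≠ 0) :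
    ⁅b i, b j⁆ = b.repr ⁅b i, b j⁆ k • b k := by
  classical
  refine b.ext_elem fun l => ?_
  rw [map_smul, b.repr_self, Finsupp.smul_apply, Finsupp.single_apply]
  split_ifs with hkl
  · simp [hkl]
  · by_contra hl
    exact hkl (hb.eq_of_repr_lie_ne_zero i j k l hk (by simpa using hl))

theorem eq_left_of_repr_lie_ne_zero {s : ι} (hk : b.repr ⁅b i, b j⁆ k ≠ 0)
    (hs : b.repr ⁅b s, b j⁆ k ≠ 0) : s = i := by
  rcases hb.pair_eq_or_disjoint i j s j k hk hs with h | h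
  · rw [Set.pair_eq_pair_iff] at h
    grind
  · exact (h.subset ⟨Set.mem_insert_of_mem _ rfl, Set.mem_insert_of_mem _ rfl⟩).elim

theorem eq_right_of_repr_lie_ne_zero {t : ι} (hk : b.repr ⁅b i, b j⁆ k ≠ 0)
    (ht : b.repr ⁅b i, b t⁆ k ≠ 0) : t = j := by
  rcases hb.pair_eq_or_disjoint i j i t k hk ht with h | h
  · rw [Set.pair_eq_pair_iff] at h
    grind
  · exact (h.subset ⟨Set.mem_insert _ _, Set.mem_insert _ _⟩).elim

theorem repr_apply_self_eq_add_of_repr_lie_ne_zero [Fintype ι] [IsDomain R] {D : L →ₗ[R] L}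
    (hD : ∀ x y : L, D ⁅x, y⁆ = ⁅D x, y⁆ + ⁅x, D y⁆) (hk : b.repr ⁅b i, b j⁆ k ≠ 0) :
    b.repr (D (b k)) k = b.repr (D (b i)) i + b.repr (D (b j)) j := by
  set c := b.repr ⁅b i, b j⁆ k
  have hlhs : b.repr (D ⁅b i, b j⁆) k = c * b.repr (D (b k)) k := by
    rw [hb.lie_eq_smul hk, map_smul, map_smul, Finsupp.smul_apply, smul_eq_mul]
  have hrhs_left : b.repr ⁅D (b i), b j⁆ k = b.repr (D (b i)) i * c := by
    refine (b.repr_lie_basis_apply _ j k).trans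
      (Finset.sum_eq_single i (fun s _ hs => ?_) (by simp))
    by_contra h
    exact hs (hb.eq_left_of_repr_lie_ne_zero hk (right_ne_zero_of_mul h))
  have hrhs_right : b.repr ⁅b i, D (b j)⁆ k = b.repr (D (b j)) j * c := by
    refine (b.repr_basis_lie_apply _ i k).trans
      (Finset.sum_eq_single j (fun t _ ht => ?_) (by simp))
    by_contra h
    exact ht (hb.eq_right_of_repr_lie_ne_zero hk (right_ne_zero_of_mul h))
  have hcoord := congrArg (fun z => b.repr z k) (hD (b i) (b j))
  simp only [map_add, Finsupp.add_apply, hlhs, hrhs_left, hrhs_right] at hcoord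
  exact mul_left_cancel₀ hk (by linear_combination hcoord)

end IsNiceBasis

end NiceBasis

/-- If a real Lie algebra 𝔤 has a nice basis `{X_1,…,X_n}` (at most one nonzero
structure constant `c_{ij}^k` for each pair (i,j), and the pairs producing a given k
are equal or disjoint), then for every derivation D of 𝔤 the diagonal part of D with
respect to this basis is again a derivation. -/
theorem stmt_17 (L : Type*) [LieRing L] [LieAlgebra ℝ L] (n : ℕ)
    (b : Module.Basis (Fin n) ℝ L)
    (hnice₁ : ∀ i j k l : Fin n,
      b.repr ⁅b i, b j⁆ k ≠ 0 → b.repr ⁅b i, b j⁆ l ≠ 0 → k = l)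
    (hnice₂ : ∀ i j s t k : Fin n,
      b.repr ⁅b i, b j⁆ k ≠ 0 → b.repr ⁅b s, b t⁆ k ≠ 0 →
        ({i, j} : Set (Fin n)) = {s, t} ∨ ({i, j} ∩ {s, t} : Set (Fin n)) = ∅)
    (D : L →ₗ[ℝ] L) (hD : ∀ x y : L, D ⁅x, y⁆ = ⁅D x, y⁆ + ⁅x, D y⁆) :
    ∃ E : L →ₗ[ℝ] L,
      (∀ i : Fin n, E (b i) = (b.repr (D (b i)) i) • b i) ∧
      (∀ x y : L, E ⁅x, y⁆ = ⁅E x, y⁆ + ⁅x, E y⁆) := by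
  have hb : IsNiceBasis b := ⟨hnice₁, hnice₂⟩
  exact ⟨Matrix.toLin b b (Matrix.diagonal fun i => b.repr (D (b i)) i),
    b.toLin_diagonal_self _,
    b.toLin_diagonal_leibniz _ fun _ _ _ hk => hb.repr_apply_self_eq_add_of_repr_lie_ne_zero hD hk⟩
end
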